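/- Let 1 ≤ n ≤ ω and f : 2^n → 2. If f^{-1}(1) has the finite intersection property and f equals 1 on a neighborhood of 1⃗, then f ≤ π_i pointwise for some projection π_i; equivalently, f^{-1}(1) has the ω-ary intersection property. -/
import Mathlib


open scoped Classical

/-- An arity: `some n` is the finite arity `n ≥ 1`; `none` is the countably infinite arity ω. -/
abbrev Arity := Option ℕ+

/-- The index set of an arity. -/
abbrev Idx : Arity → Type
  | some n => Fin (n : ℕ)
  | none => ℕ

/-- A Boolean function of some arity `1 ≤ n ≤ ω`.  The input space `Idx a → Bool`
carries the product topology (with `Bool` discrete), the product σ-algebra (= Borel),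
and the coordinatewise partial order. -/
abbrev BFun : Type := Σ a : Arity, (Idx a → Bool) → Bool

/-- A clone: a set of Boolean functions of arities `1 ≤ n ≤ ω` containing all projections
and closed under composition. -/
structure IsClone (F : Set BFun) : Prop where
  proj : ∀ (a : Arity) (i : Idx a), (⟨a, fun x => x i⟩ : BFun) ∈ F
  comp : ∀ (a b : Arity) (g : (Idx a → Bool) → Bool) (f : Idx a → (Idx b → Bool) → Bool),
      (⟨a, g⟩ : BFun) ∈ F → (∀ i, (⟨b, f i⟩ : BFun) ∈ F) →
      (⟨b, fun x => g fun i => f i x⟩ : BFun) ∈ F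

/-- The clone generated by a set of Boolean functions. -/
def cloneGen (G : Set BFun) : Set BFun := ⋂₀ {F : Set BFun | IsClone F ∧ G ⊆ F}

/-- `f` has finite arity. -/
def finitary (f : BFun) : Prop := f.1 ≠ none

/-- `f` is Borel: the preimage of `1` is a Borel set. -/
def IsBorelFun (f : BFun) : Prop := MeasurableSet {x | f.2 x = true}

/-- `f` is continuous (equivalently, depends on only finitely many coordinates). -/
def IsContFun (f : BFun) : Prop := Continuous f.2

/-- `f(0⃗) = 0`. -/
def PresBot (f : BFun) : Prop := f.2 (fun _ => false) = false

/-- `f(1⃗) = 1`. -/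
def PresTop (f : BFun) : Prop := f.2 (fun _ => true) = true

/-- `f` vanishes on a neighborhood of `0⃗`, i.e. `0⃗` is not in the closure of `f⁻¹(1)`. -/
def VanishNearBot (f : BFun) : Prop := (fun _ => false) ∉ closure {x | f.2 x = true}

/-- `f` equals `1` on a neighborhood of `1⃗`, i.e. `1⃗` is not in the closure of `f⁻¹(0)`. -/
def OneNearTop (f : BFun) : Prop := (fun _ => true) ∉ closure {x | f.2 x = false}

/-- Countably infinite disjunction `⋁ : 2^ω → 2`. -/
noncomputable def bigOr : (ℕ → Bool) → Bool := fun x => decide (∃ i, x i = true)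

/-- Countably infinite conjunction `⋀ : 2^ω → 2`. -/
noncomputable def bigAnd : (ℕ → Bool) → Bool := fun x => decide (∀ i, x i = true)

/-- `liminf : 2^ω → 2`, equal to `1` iff all but finitely many bits are `1`. -/
noncomputable def liminfF : (ℕ → Bool) → Bool := fun x => decide (∃ N, ∀ j, N ≤ j → x j = true)

/-- If `f⁻¹(1)` has the finite intersection property (no finite family of its members has
coordinatewise meet `0⃗`) and `f` equals `1` on a neighborhood of `1⃗`, then `f ≤ π_i` for
some projection — equivalently, `f⁻¹(1)` has the ω-ary intersection property. -/
theorem le_proj_of_fip_of_oneNearTop (a : Arity) (f : (Idx a → Bool) → Bool)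
    (hFIP : ∀ k : ℕ, ∀ x : Fin k → Idx a → Bool,
      (∀ j, f (x j) = true) → ∃ i, ∀ j, x j i = true)
    (hTop : (fun _ => true) ∉ closure {x | f x = false}) :
    (∃ i : Idx a, ∀ x, f x ≤ x i) ∧
    (∀ x : ℕ → Idx a → Bool, (∀ q, f (x q) = true) → ∃ i, ∀ q, x q i = true) := by
  -- Extract a finite set of coordinates witnessing the neighborhood of 1⃗.
  rw [mem_closure_iff] at hTop
  push_neg at hTop
  obtain ⟨o, ho, hmem, hdisj⟩ := hTop
  have hno : o ∈ nhds (fun _ => true : Idx a → Bool) := ho.mem_nhds hmem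
  rw [nhds_pi, Filter.mem_pi] at hno
  obtain ⟨I, hIfin, t, ht, hsub⟩ := hno
  have hI : ∀ x : Idx a → Bool, (∀ i ∈ hIfin.toFinset, x i = true) → f x = true := by
    intro x hx
    have hxo : x ∈ o := by
      apply hsub
      intro i hi
      have : x i = true := hx i (hIfin.mem_toFinset.mpr hi)
      rw [this]
      exact mem_of_mem_nhds (ht i)
    by_contra hfx
    rw [Bool.not_eq_true] at hfx
    have : x ∈ (∅ : Set (Idx a → Bool)) := hdisj ▸ ⟨hxo, hfx⟩
    exact this
  -- The key claim: some projection dominates f on f⁻¹(1).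
  have key : ∃ i : Idx a, ∀ x, f x = true → x i = true := by
    by_contra hex
    push_neg at hex
    choose c hc1 hc2 using hex
    set L := hIfin.toFinset.toList with hL
    set w : Idx a → Bool := fun j => decide (j ∈ hIfin.toFinset) with hw
    have hfw : f w = true := hI w (fun i hi => by simp [hw, hIfin.mem_toFinset.mp hi])
    set X : Fin (L.length + 1) → Idx a → Bool := Fin.cons w (fun j => c (L.get j)) with hX
    have hall : ∀ j, f (X j) = true := by
      intro j
      refine Fin.cases ?_ ?_ j
      · simpa [hX] using hfw
      · intro j
        simpa [hX] using hc1 (L.get j)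
    obtain ⟨i, hi⟩ := hFIP (L.length + 1) X hall
    have hi0 : w i = true := by simpa [hX] using hi 0
    have hiI : i ∈ hIfin.toFinset := hIfin.mem_toFinset.mpr (by simpa [hw] using hi0)
    have hiL : i ∈ L := Finset.mem_toList.mpr hiI
    obtain ⟨j, hj⟩ := List.mem_iff_get.mp hiL
    have : c (L.get j) i = true := by simpa [hX] using hi j.succ
    rw [hj] at this
    exact hc2 i this
  obtain ⟨i, hi⟩ := key
  refine ⟨⟨i, fun x => ?_⟩, fun x hx => ⟨i, fun q => hi (x q) (hx q)⟩⟩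
  by_cases hfx : f x = true
  · simp [hfx, hi x hfx]
  · rw [Bool.not_eq_true] at hfx
    simp [hfx]
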